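/- Let A be a finite set with at least two elements and (R_a)_{a∈A} real random variables on a common probability space, each almost surely taking values in [r_min, r_max]. Let β < 0 and a₁ ∈ A be such that U₁ := EntRM_β[R_{a₁}] > EntRM_β[R_a] for every a ≠ a₁; set U₂ := max_{a ≠ a₁} EntRM_β[R_a] and ΔU := U₁ − U₂. Then for every ε > 0 satisfying ε·(U₁ − r_min) < (−β)·ΔU, and for every a ≠ a₁, EntRM_{β+ε}[R_{a₁}] > EntRM_{β+ε}[R_a]; in particular a₁ remains the strictly optimal action at β + ε. -/

import Mathlib

open MeasureTheory

/-- Entropic risk measure of a real random variable `X` under measure `μ`. -/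
noncomputable def entRM {Ω : Type*} [MeasurableSpace Ω] (μ : Measure Ω) (β : ℝ) (X : Ω → ℝ) : ℝ :=
  if β = 0 then ∫ ω, X ω ∂μ else (1 / β) * Real.log (∫ ω, Real.exp (β * X ω) ∂μ)

section Aux
variable {Ω : Type*} [MeasurableSpace Ω] {μ : Measure Ω} [IsProbabilityMeasure μ]
variable {X : Ω → ℝ} {rmin rmax : ℝ}

lemma aux_integrable (hX : Measurable X) (hb : ∀ᵐ ω ∂μ, X ω ∈ Set.Icc rmin rmax) (c : ℝ) :
    Integrable (fun ω => Real.exp (c * X ω)) μ := by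
  apply Integrable.mono' (integrable_const (Real.exp (|c| * (|rmin| + |rmax|))))
  · exact (Real.measurable_exp.comp (hX.const_mul c)).aestronglyMeasurable
  · filter_upwards [hb] with ω hω
    rw [Real.norm_eq_abs, abs_of_pos (Real.exp_pos _)]
    apply Real.exp_le_exp.2
    have h1 : |X ω| ≤ max |rmin| |rmax| := abs_le_max_abs_abs hω.1 hω.2
    calc c * X ω ≤ |c * X ω| := le_abs_self _
      _ = |c| * |X ω| := abs_mul _ _
      _ ≤ |c| * (|rmin| + |rmax|) := by
          apply mul_le_mul_of_nonneg_left _ (abs_nonneg c)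
          exact h1.trans (max_le (le_add_of_nonneg_right (abs_nonneg _))
            (le_add_of_nonneg_left (abs_nonneg _)))

lemma aux_pos (hX : Measurable X) (hb : ∀ᵐ ω ∂μ, X ω ∈ Set.Icc rmin rmax) (c : ℝ) :
    0 < ∫ ω, Real.exp (c * X ω) ∂μ := by
  have hlow : ∀ᵐ ω ∂μ, Real.exp (min (c * rmin) (c * rmax)) ≤ Real.exp (c * X ω) := by
    filter_upwards [hb] with ω hω
    apply Real.exp_le_exp.2
    rcases le_total 0 c with hc | hc
    · exact min_le_of_left_le (mul_le_mul_of_nonneg_left hω.1 hc)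
    · exact min_le_of_right_le (mul_le_mul_of_nonpos_left hω.2 hc)
  have h := integral_mono_ae (integrable_const _) (aux_integrable hX hb c) hlow
  simp only [integral_const, measure_univ, ENNReal.toReal_one, probReal_univ, smul_eq_mul, one_mul] at h
  exact lt_of_lt_of_le (Real.exp_pos _) h

lemma aux_ge_rmin (hX : Measurable X) (hb : ∀ᵐ ω ∂μ, X ω ∈ Set.Icc rmin rmax)
    {c : ℝ} (hc : c < 0) : rmin ≤ (1 / c) * Real.log (∫ ω, Real.exp (c * X ω) ∂μ) := by
  have hup : ∫ ω, Real.exp (c * X ω) ∂μ ≤ Real.exp (c * rmin) := by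
    have hae : ∀ᵐ ω ∂μ, Real.exp (c * X ω) ≤ Real.exp (c * rmin) := by
      filter_upwards [hb] with ω hω
      exact Real.exp_le_exp.2 (mul_le_mul_of_nonpos_left hω.1 hc.le)
    have h := integral_mono_ae (aux_integrable hX hb c) (integrable_const _) hae
    simpa using h
  have hlog : Real.log (∫ ω, Real.exp (c * X ω) ∂μ) ≤ c * rmin :=
    (Real.log_le_iff_le_exp (aux_pos hX hb c)).2 hup
  have h1c : (1 : ℝ) / c ≤ 0 := by
    apply div_nonpos_of_nonneg_of_nonpos <;> linarith
  calc rmin = (1 / c) * (c * rmin) := by field_simp [hc.ne]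
    _ ≤ (1 / c) * Real.log (∫ ω, Real.exp (c * X ω) ∂μ) :=
        mul_le_mul_of_nonpos_left hlog h1c

/-- Jensen: monotonicity of `c ↦ (1/c) log ∫ exp (c X)` for negative `c`. -/
lemma aux_mono (hX : Measurable X) (hb : ∀ᵐ ω ∂μ, X ω ∈ Set.Icc rmin rmax)
    {b c : ℝ} (hbc : b < c) (hc : c < 0) :
    (1 / b) * Real.log (∫ ω, Real.exp (b * X ω) ∂μ)
      ≤ (1 / c) * Real.log (∫ ω, Real.exp (c * X ω) ∂μ) := by
  have hb0 : b < 0 := hbc.trans hc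
  set p : ℝ := b / c with hp
  have hp1 : 1 < p := (one_lt_div_of_neg hc).2 hbc
  have heq : ∀ ω, (Real.exp (c * X ω)) ^ p = Real.exp (b * X ω) := by
    intro ω
    rw [← Real.exp_mul]
    congr 1
    field_simp [hp, hc.ne]
    rw [hp]; field_simp [hc.ne]
  have hjen : (∫ ω, Real.exp (c * X ω) ∂μ) ^ p ≤ ∫ ω, Real.exp (b * X ω) ∂μ := by
    have hconv : ConvexOn ℝ (Set.Ici 0) fun x : ℝ => x ^ p := convexOn_rpow hp1.le
    have hcont : ContinuousOn (fun x : ℝ => x ^ p) (Set.Ici 0) := fun x _ =>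
      (Real.continuousAt_rpow_const x p (Or.inr (by positivity))).continuousWithinAt
    have h := hconv.map_integral_le hcont isClosed_Ici
      (Filter.Eventually.of_forall fun ω => Set.mem_Ici.2 (Real.exp_pos _).le)
      (aux_integrable hX hb c)
      (by simpa [Function.comp_def, heq] using aux_integrable hX hb b)
    calc (∫ ω, Real.exp (c * X ω) ∂μ) ^ p ≤ ∫ ω, (Real.exp (c * X ω)) ^ p ∂μ := h
      _ = ∫ ω, Real.exp (b * X ω) ∂μ := by simp only [heq]
  have hposc := aux_pos hX hb c
  have hlog : p * Real.log (∫ ω, Real.exp (c * X ω) ∂μ)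
      ≤ Real.log (∫ ω, Real.exp (b * X ω) ∂μ) := by
    have h := Real.log_le_log (Real.rpow_pos_of_pos hposc p) hjen
    rwa [Real.log_rpow hposc] at h
  have h1b : (1 : ℝ) / b ≤ 0 := by
    apply div_nonpos_of_nonneg_of_nonpos <;> linarith
  calc (1 / b) * Real.log (∫ ω, Real.exp (b * X ω) ∂μ)
      ≤ (1 / b) * (p * Real.log (∫ ω, Real.exp (c * X ω) ∂μ)) :=
        mul_le_mul_of_nonpos_left hlog h1b
    _ = (1 / c) * Real.log (∫ ω, Real.exp (c * X ω) ∂μ) := by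
        rw [hp]; field_simp [hb0.ne, hc.ne]

/-- Shift bound: `(1/γ) log ∫ exp(γX) ≤ (β * ((1/β) log ∫ exp(βX)) + ε * rmin) / γ`
for `γ = β + ε < 0`. -/
lemma aux_shift (hX : Measurable X) (hb : ∀ᵐ ω ∂μ, X ω ∈ Set.Icc rmin rmax)
    {b e : ℝ} (hb0 : b < 0) (he : 0 < e) (hbe : b + e < 0) :
    (1 / (b + e)) * Real.log (∫ ω, Real.exp ((b + e) * X ω) ∂μ)
      ≤ (b * ((1 / b) * Real.log (∫ ω, Real.exp (b * X ω) ∂μ)) + e * rmin) / (b + e) := by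
  have hlow : ∀ᵐ ω ∂μ, Real.exp (e * rmin) * Real.exp (b * X ω)
      ≤ Real.exp ((b + e) * X ω) := by
    filter_upwards [hb] with ω hω
    rw [← Real.exp_add]
    apply Real.exp_le_exp.2
    nlinarith [hω.1]
  have hint := integral_mono_ae ((aux_integrable hX hb b).const_mul _)
    (aux_integrable hX hb (b + e)) hlow
  rw [integral_const_mul] at hint
  have hposb := aux_pos hX hb b
  have hposbe := aux_pos hX hb (b + e)
  have hlog : e * rmin + Real.log (∫ ω, Real.exp (b * X ω) ∂μ)
      ≤ Real.log (∫ ω, Real.exp ((b + e) * X ω) ∂μ) := by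
    have h := Real.log_le_log (by positivity) hint
    rwa [Real.log_mul (Real.exp_pos _).ne' hposb.ne', Real.log_exp] at h
  have hsimp : b * ((1 / b) * Real.log (∫ ω, Real.exp (b * X ω) ∂μ))
      = Real.log (∫ ω, Real.exp (b * X ω) ∂μ) := by field_simp [hb0.ne]
  rw [hsimp, one_div_mul_eq_div, div_le_div_right_of_neg hbe]
  linarith

end Aux

theorem stmt_2 {Ω A : Type*} [MeasurableSpace Ω] (μ : Measure Ω) [IsProbabilityMeasure μ]
    [Fintype A] [Nontrivial A]
    (R : A → Ω → ℝ) (hmeas : ∀ a, Measurable (R a))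
    (rmin rmax : ℝ) (hbdd : ∀ a, ∀ᵐ ω ∂μ, R a ω ∈ Set.Icc rmin rmax)
    (β : ℝ) (hβ : β < 0) (a₁ : A)
    (U₁ U₂ ΔU : ℝ)
    (hU₁ : U₁ = entRM μ β (R a₁))
    (hopt : ∀ a ≠ a₁, entRM μ β (R a) < U₁)
    (hU₂ : IsGreatest {u : ℝ | ∃ a ≠ a₁, u = entRM μ β (R a)} U₂)
    (hΔU : ΔU = U₁ - U₂)
    (ε : ℝ) (hε : 0 < ε) (hεcond : ε * (U₁ - rmin) < (-β) * ΔU) :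
    ∀ a ≠ a₁, entRM μ (β + ε) (R a) < entRM μ (β + ε) (R a₁) := by
  have hβne : β ≠ 0 := hβ.ne
  -- U₂ is attained, U₂ < U₁, ΔU > 0
  obtain ⟨a₂, ha₂, hU₂eq⟩ := hU₂.1
  have hU₂lt : U₂ < U₁ := hU₂eq ▸ hopt a₂ ha₂
  have hΔUpos : 0 < ΔU := by rw [hΔU]; linarith
  -- rmin ≤ U₂ < U₁
  have hrminU₂ : rmin ≤ U₂ := by
    rw [hU₂eq, entRM, if_neg hβne]
    exact aux_ge_rmin (hmeas a₂) (hbdd a₂) hβ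
  have hU₁rmin : rmin < U₁ := lt_of_le_of_lt hrminU₂ hU₂lt
  -- β + ε < 0
  have hγ : β + ε < 0 := by nlinarith
  have hγne : β + ε ≠ 0 := hγ.ne
  intro a ha
  -- entRM at β+ε for a₁ is ≥ U₁
  have h1 : U₁ ≤ entRM μ (β + ε) (R a₁) := by
    rw [hU₁, entRM, entRM, if_neg hβne, if_neg hγne]
    exact aux_mono (hmeas a₁) (hbdd a₁) (by linarith) hγ
  -- entRM at β+ε for a is ≤ (β * entRM β (R a) + ε rmin)/(β+ε)
  have h2 : entRM μ (β + ε) (R a) ≤ (β * entRM μ β (R a) + ε * rmin) / (β + ε) := by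
    rw [entRM, entRM, if_neg hβne, if_neg hγne]
    exact aux_shift (hmeas a) (hbdd a) hβ hε hγ
  have hEa : entRM μ β (R a) ≤ U₂ := hU₂.2 ⟨a, ha, rfl⟩
  have h3 : (β * entRM μ β (R a) + ε * rmin) / (β + ε) ≤ (β * U₂ + ε * rmin) / (β + ε) := by
    rw [div_le_div_right_of_neg hγ]
    nlinarith
  have h4 : (β * U₂ + ε * rmin) / (β + ε) < U₁ := by
    rw [div_lt_iff_of_neg hγ]
    nlinarith
  linarith
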